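/- Let (Ω, P) be a probability space, let T : Ω → ℝ be a nonnegative random variable, let λ > 0 and p ∈ (0, 1], and let (Eᵢ)_{i≥1} be a sequence of events such that: (i) for every t > 0, the event {T > t} is contained in the intersection E₁ ∩ E₂ ∩ ⋯ ∩ E_{⌊t/λ⌋ − 1}; and (ii) P(E₁) ≤ 1 − p and, for every i ≥ 2, the conditional probability P(Eᵢ | E₁ ∩ ⋯ ∩ E_{i-1}) is at most 1 − p (with conditional probability given a null event taken to be 0). Then there exist a constant c > 0 and a time t₀ > 0 such that P(T > t) ≤ e^{−c t} for all t ≥ t₀; that is, the tail of the distribution of T has an exponential decay. -/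

import Mathlib

/-!
By the chain rule for conditional probabilities, `P (E 1 ∩ ⋯ ∩ E n) ≤ (1 - p) ^ n ≤ exp (-p n)`.
The event `{T > t}` lies in such an intersection with `n = ⌊t / λ⌋ - 1`, and `n ≥ t / (2 λ)`
as soon as `t ≥ 4 λ`, so `P (T > t) ≤ exp (-(p / (2 λ)) t)`.
-/

open MeasureTheory ProbabilityTheory

theorem measure_biInter_Icc_le_pow {Ω : Type*} [MeasurableSpace Ω] {P : Measure Ω}
    [IsProbabilityMeasure P] {E : ℕ → Set Ω} (hE : ∀ i, MeasurableSet (E i)) {r : ENNReal}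
    (hcond : ∀ i, 1 ≤ i → P[|⋂ j ∈ Finset.Ico 1 i, E j] (E i) ≤ r) (n : ℕ) :
    P (⋂ j ∈ Finset.Icc 1 n, E j) ≤ r ^ n := by
  induction n with
  | zero => simp
  | succ n ih =>
    set A := ⋂ j ∈ Finset.Icc 1 n, E j
    have hA : MeasurableSet A := Finset.measurableSet_biInter _ fun i _ => hE i
    have hsplit : ⋂ j ∈ Finset.Icc 1 (n + 1), E j = A ∩ E (n + 1) := by
      rw [← Finset.Ico_add_one_right_eq_Icc, ← Finset.insert_Ico_right_eq_Ico_add_one (by omega),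
        Finset.set_biInter_insert, Finset.Ico_add_one_right_eq_Icc, Set.inter_comm]
    have hstep : P[|A] (E (n + 1)) ≤ r := by
      simpa only [A, Finset.Ico_add_one_right_eq_Icc] using hcond (n + 1) (by omega)
    calc P (⋂ j ∈ Finset.Icc 1 (n + 1), E j) = P[|A] (E (n + 1)) * P A := by
          rw [hsplit, cond_mul_eq_inter hA]
      _ ≤ r * r ^ n := mul_le_mul' hstep ih
      _ = r ^ (n + 1) := (pow_succ' r n).symm

theorem div_two_mul_le_toNat_floor_div_sub_one {t lam : ℝ} (hlam : 0 < lam) (ht : 4 * lam ≤ t) :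
    t / (2 * lam) ≤ ((⌊t / lam⌋ - 1).toNat : ℝ) := by
  have hfloor : t / lam - 2 < ((⌊t / lam⌋ - 1 : ℤ) : ℝ) := by
    push_cast
    linarith [Int.sub_one_lt_floor (t / lam)]
  have htoNat : ((⌊t / lam⌋ - 1 : ℤ) : ℝ) ≤ ((⌊t / lam⌋ - 1).toNat : ℝ) := by
    exact_mod_cast Int.self_le_toNat _
  have hhalf : t / (2 * lam) ≤ t / lam - 2 := by
    have h2 : 2 ≤ t / (2 * lam) := by rw [le_div_iff₀ (by positivity)]; linarith
    have hdouble : t / lam = 2 * (t / (2 * lam)) := by field_simp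
    linarith
  linarith

theorem tail_exponential_decay_general {Ω : Type*} [MeasurableSpace Ω]
    (P : Measure Ω) [IsProbabilityMeasure P]
    (T : Ω → ℝ)
    (lam : ℝ) (hlam : 0 < lam)
    (p : ℝ) (hp0 : 0 < p)
    (E : ℕ → Set Ω) (hE : ∀ i, MeasurableSet (E i))
    (hsub : ∀ t : ℝ, 0 < t →
      {ω | t < T ω} ⊆ ⋂ i ∈ Finset.Icc 1 (⌊t / lam⌋ - 1).toNat, E i)
    (h1 : P (E 1) ≤ ENNReal.ofReal (1 - p))
    (hcond : ∀ i, 2 ≤ i →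
      P[|⋂ j ∈ Finset.Ico 1 i, E j] (E i) ≤ ENNReal.ofReal (1 - p)) :
    ∃ c > 0, ∃ t₀ > 0, ∀ t ≥ t₀,
      P {ω | t < T ω} ≤ ENNReal.ofReal (Real.exp (-c * t)) := by
  have hcond_exp : ∀ i, 1 ≤ i →
      P[|⋂ j ∈ Finset.Ico 1 i, E j] (E i) ≤ ENNReal.ofReal (Real.exp (-p)) := by
    intro i hi
    refine le_trans ?_ (ENNReal.ofReal_le_ofReal (Real.one_sub_le_exp_neg p))
    rcases hi.eq_or_lt with rfl | hi
    · simpa using h1 -- the empty intersection is `univ`, and `P[|univ] = P`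
    · exact hcond i hi
  refine ⟨p / (2 * lam), by positivity, 4 * lam, by positivity, fun t ht => ?_⟩
  set n := (⌊t / lam⌋ - 1).toNat
  calc P {ω | t < T ω} ≤ P (⋂ j ∈ Finset.Icc 1 n, E j) := measure_mono (hsub t (by linarith))
    _ ≤ ENNReal.ofReal (Real.exp (-p)) ^ n := measure_biInter_Icc_le_pow hE hcond_exp n
    _ = ENNReal.ofReal (Real.exp (-p * n)) := by
      rw [← ENNReal.ofReal_pow (Real.exp_nonneg _), ← Real.exp_nat_mul, mul_comm, neg_mul]
    _ ≤ ENNReal.ofReal (Real.exp (-(p / (2 * lam)) * t)) := by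
      refine ENNReal.ofReal_le_ofReal (Real.exp_le_exp.2 ?_)
      calc -p * n ≤ -p * (t / (2 * lam)) :=
            mul_le_mul_of_nonpos_left (div_two_mul_le_toNat_floor_div_sub_one hlam ht) (by linarith)
        _ = -(p / (2 * lam)) * t := by ring

/-- Abstract exponential-tail theorem: if for every `t > 0` the event `{T > t}`
is contained in `E 1 ∩ ⋯ ∩ E (⌊t/λ⌋ - 1)`, and `P(E 1) ≤ 1 - p` as well as each
conditional probability `P(E i | E 1 ∩ ⋯ ∩ E (i-1)) ≤ 1 - p`, then the tail of
the distribution of `T` decays exponentially: `P(T > t) ≤ e^(-c t)` for some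
`c > 0` and all sufficiently large `t`.  (Mathlib's `P[|A]` is the zero measure
when `P A = 0`, matching the stated convention.) -/
theorem tail_exponential_decay {Ω : Type*} [MeasurableSpace Ω]
    (P : Measure Ω) [IsProbabilityMeasure P]
    (T : Ω → ℝ) (hT : ∀ ω, 0 ≤ T ω)
    (lam : ℝ) (hlam : 0 < lam)
    (p : ℝ) (hp0 : 0 < p) (hp1 : p ≤ 1)
    (E : ℕ → Set Ω) (hE : ∀ i, MeasurableSet (E i))
    (hsub : ∀ t : ℝ, 0 < t →
      {ω | t < T ω} ⊆ ⋂ i ∈ Finset.Icc 1 (⌊t / lam⌋ - 1).toNat, E i)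
    (h1 : P (E 1) ≤ ENNReal.ofReal (1 - p))
    (hcond : ∀ i, 2 ≤ i →
      P[|⋂ j ∈ Finset.Ico 1 i, E j] (E i) ≤ ENNReal.ofReal (1 - p)) :
    ∃ c > 0, ∃ t₀ > 0, ∀ t ≥ t₀,
      P {ω | t < T ω} ≤ ENNReal.ofReal (Real.exp (-c * t)) :=
  tail_exponential_decay_general P T lam hlam p hp0 E hE hsub h1 hcond
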